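/- (Proposition 4) Fix ε ∈ (0,1) and let ε* ∈ ℝ be the unique real with Φ(ε*) = ε. Then the expected number of common features in the MVP-IBP model, E(c^{(ε)}) = p · (1 − Φ((ε* − μ_p)/τ_p)), satisfies lim_{p→∞} p · (1 − Φ((ε* − μ_p)/τ_p)) = α · exp(−ε* − 1/2). -/

import Mathlib

/-!
Put `u_p = -μ_p / √(1 + τ_p²)`, so that the hypothesis reads `1 - Φ(u_p) = α / (α + p)`, and
`v_p = (ε* - μ_p) / τ_p = (ε* + u_p √(1 + τ_p²)) / τ_p`. Mills' ratio `1 - Φ(x) ~ φ(x) / x` turns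
both tail probabilities into densities: first `p φ(u_p) / u_p → α`; taking logarithms,
`u_p² + 2 log u_p = τ_p² + O(1)`, so `u_p ~ τ_p`. Then `v_p² - u_p² → 1 + 2ε*`, hence
`p φ(v_p) / v_p = (p φ(u_p) / u_p) (u_p / v_p) e^{-(v_p² - u_p²)/2} → α e^{-ε* - 1/2}`,
and Mills' ratio once more gives the same limit for `p (1 - Φ(v_p))`.
-/

open MeasureTheory Real Filter

/-- The standard normal density `φ(x) = (2π)^{-1/2} exp(-x²/2)`. -/
noncomputable def stdNormalPDF (x : ℝ) : ℝ :=
  (Real.sqrt (2 * Real.pi))⁻¹ * Real.exp (-x ^ 2 / 2)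

/-- The standard normal CDF `Φ(x) = ∫_{-∞}^x φ(t) dt`. -/
noncomputable def stdNormalCDF (x : ℝ) : ℝ :=
  ∫ t in Set.Iio x, stdNormalPDF t

/-- `τ_p = √(2 log p)`. -/
noncomputable def tauP (p : ℕ) : ℝ := Real.sqrt (2 * Real.log p)

/-- The density of `N(μ_p, τ_p²)` at `x`, namely `τ_p⁻¹ φ((x - μ_p)/τ_p)`. -/
noncomputable def mvpDens (μ : ℕ → ℝ) (p : ℕ) (x : ℝ) : ℝ :=
  (tauP p)⁻¹ * stdNormalPDF ((x - μ p) / tauP p)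

open Set Topology ProbabilityTheory

lemma stdNormalPDF_eq_gaussianPDFReal : stdNormalPDF = gaussianPDFReal 0 1 := by
  ext x
  simp [stdNormalPDF, gaussianPDFReal]

lemma stdNormalPDF_pos (x : ℝ) : 0 < stdNormalPDF x := by
  unfold stdNormalPDF
  positivity

lemma stdNormalPDF_neg (x : ℝ) : stdNormalPDF (-x) = stdNormalPDF x := by
  simp [stdNormalPDF]

lemma stdNormalPDF_eq_mul_exp (u v : ℝ) :
    stdNormalPDF v = stdNormalPDF u * exp (-(v ^ 2 - u ^ 2) / 2) := by
  rw [stdNormalPDF, stdNormalPDF, mul_assoc, ← exp_add]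
  ring_nf

lemma integrable_stdNormalPDF : Integrable stdNormalPDF :=
  stdNormalPDF_eq_gaussianPDFReal ▸ integrable_gaussianPDFReal 0 1

lemma one_sub_stdNormalCDF (x : ℝ) : 1 - stdNormalCDF x = ∫ t in Ioi x, stdNormalPDF t := by
  have h_one : ∫ t, stdNormalPDF t = 1 := by
    rw [stdNormalPDF_eq_gaussianPDFReal, integral_gaussianPDFReal_eq_one 0 one_ne_zero]
  have h_split := integral_add_compl (measurableSet_Iio (a := x)) integrable_stdNormalPDF
  rw [compl_Iio, h_one, integral_Ici_eq_integral_Ioi] at h_split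
  rw [stdNormalCDF]
  linarith

lemma stdNormalCDF_neg (x : ℝ) : stdNormalCDF (-x) = 1 - stdNormalCDF x := by
  rw [one_sub_stdNormalCDF, stdNormalCDF, ← integral_Iic_eq_integral_Iio, ← integral_comp_neg_Ioi]
  simp only [stdNormalPDF_neg]

lemma stdNormalCDF_mono : Monotone stdNormalCDF := fun _ _ hab =>
  setIntegral_mono_set integrable_stdNormalPDF.integrableOn
    (.of_forall fun t => (stdNormalPDF_pos t).le) (Iio_subset_Iio hab).eventuallyLE

lemma hasDerivAt_stdNormalPDF (t : ℝ) :
    HasDerivAt stdNormalPDF (-t * stdNormalPDF t) t := by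
  have h_exponent : HasDerivAt (fun x : ℝ => -x ^ 2 / 2) (-t) t :=
    ((hasDerivAt_pow 2 t).neg.div_const 2).congr_deriv (by norm_num; ring)
  exact (h_exponent.exp.const_mul (√(2 * π))⁻¹).congr_deriv (by rw [stdNormalPDF]; ring)

lemma tendsto_stdNormalPDF_atTop : Tendsto stdNormalPDF atTop (𝓝 0) := by
  have h : Tendsto (fun x : ℝ => -x ^ 2 / 2) atTop atBot :=
    (tendsto_neg_atTop_atBot.comp (tendsto_pow_atTop two_ne_zero)).atBot_div_const two_pos
  have h_exp := (tendsto_exp_atBot.comp h).const_mul (√(2 * π))⁻¹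
  rwa [mul_zero] at h_exp

lemma one_sub_stdNormalCDF_le {x : ℝ} (hx : 0 < x) :
    1 - stdNormalCDF x ≤ stdNormalPDF x / x := by
  have hderiv : ∀ t ∈ Ici x, HasDerivAt (fun s => -stdNormalPDF s) (t * stdNormalPDF t) t :=
    fun t _ => (hasDerivAt_stdNormalPDF t).neg.congr_deriv (by ring)
  have hnonneg : ∀ t ∈ Ioi x, 0 ≤ t * stdNormalPDF t :=
    fun t ht => mul_nonneg (hx.trans ht).le (stdNormalPDF_pos t).le
  have hlim : Tendsto (fun s => -stdNormalPDF s) atTop (𝓝 0) := by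
    simpa using tendsto_stdNormalPDF_atTop.neg
  rw [one_sub_stdNormalCDF, le_div_iff₀ hx, ← integral_mul_const]
  calc ∫ t in Ioi x, stdNormalPDF t * x ≤ ∫ t in Ioi x, t * stdNormalPDF t :=
        setIntegral_mono_on (integrable_stdNormalPDF.integrableOn.mul_const x)
          (integrableOn_Ioi_deriv_of_nonneg' hderiv hnonneg hlim) measurableSet_Ioi
          fun t ht => by
            rw [mul_comm]
            exact mul_le_mul_of_nonneg_right ht.le (stdNormalPDF_pos t).le
    _ = stdNormalPDF x := by rw [integral_Ioi_of_hasDerivAt_of_nonneg' hderiv hnonneg hlim]; ring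

lemma le_one_sub_stdNormalCDF {x : ℝ} (hx : 0 < x) :
    x / (1 + x ^ 2) * stdNormalPDF x ≤ 1 - stdNormalCDF x := by
  have hderiv : ∀ t ∈ Ici x,
      HasDerivAt (fun s => -stdNormalPDF s / s) ((1 + 1 / t ^ 2) * stdNormalPDF t) t := by
    intro t ht
    have ht0 : t ≠ 0 := (hx.trans_le ht).ne'
    exact ((hasDerivAt_stdNormalPDF t).neg.div (hasDerivAt_id t) ht0).congr_deriv
      (by simp only [Pi.neg_apply, id]; field_simp; ring)
  have hnonneg : ∀ t ∈ Ioi x, 0 ≤ (1 + 1 / t ^ 2) * stdNormalPDF t :=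
    fun t _ => mul_nonneg (by positivity) (stdNormalPDF_pos t).le
  have hlim : Tendsto (fun s => -stdNormalPDF s / s) atTop (𝓝 0) := by
    simpa [div_eq_mul_inv] using (tendsto_stdNormalPDF_atTop.mul tendsto_inv_atTop_zero).neg
  have h_le : stdNormalPDF x / x ≤ (1 + 1 / x ^ 2) * (1 - stdNormalCDF x) := by
    rw [one_sub_stdNormalCDF, ← integral_const_mul]
    calc stdNormalPDF x / x = ∫ t in Ioi x, (1 + 1 / t ^ 2) * stdNormalPDF t := by
          rw [integral_Ioi_of_hasDerivAt_of_nonneg' hderiv hnonneg hlim]; ring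
      _ ≤ _ := setIntegral_mono_on (integrableOn_Ioi_deriv_of_nonneg' hderiv hnonneg hlim)
          (integrable_stdNormalPDF.integrableOn.const_mul _) measurableSet_Ioi
          fun t ht => mul_le_mul_of_nonneg_right (by gcongr; exact ht.le) (stdNormalPDF_pos t).le
  calc x / (1 + x ^ 2) * stdNormalPDF x = stdNormalPDF x / x / (1 + 1 / x ^ 2) := by
        field_simp
        ring
    _ ≤ 1 - stdNormalCDF x := by
        rw [div_le_iff₀ (by positivity)]
        linarith

lemma tendsto_mul_one_sub_stdNormalCDF_div_stdNormalPDF :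
    Tendsto (fun x => x * (1 - stdNormalCDF x) / stdNormalPDF x) atTop (𝓝 1) := by
  have h_lower : Tendsto (fun x : ℝ => x ^ 2 / (1 + x ^ 2)) atTop (𝓝 1) := by
    have h := tendsto_inv_atTop_zero.comp
      (tendsto_atTop_add_const_left _ 1 (tendsto_pow_atTop (α := ℝ) two_ne_zero))
    have h_sub := h.const_sub 1
    rw [sub_zero] at h_sub
    refine h_sub.congr fun x => ?_
    simp only [Function.comp]
    field_simp
    ring
  refine tendsto_of_tendsto_of_tendsto_of_le_of_le' h_lower tendsto_const_nhds ?_ ?_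
  · filter_upwards [eventually_gt_atTop 0] with x hx
    rw [le_div_iff₀ (stdNormalPDF_pos x)]
    calc x ^ 2 / (1 + x ^ 2) * stdNormalPDF x = x * (x / (1 + x ^ 2) * stdNormalPDF x) := by ring
      _ ≤ x * (1 - stdNormalCDF x) := mul_le_mul_of_nonneg_left (le_one_sub_stdNormalCDF hx) hx.le
  · filter_upwards [eventually_gt_atTop 0] with x hx
    rw [div_le_one (stdNormalPDF_pos x), ← le_div_iff₀' hx]
    exact one_sub_stdNormalCDF_le hx

section Asymptotics

variable {ι : Type*} {l : Filter ι} {τ u v c : ι → ℝ} {e : ℝ}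

lemma tendsto_atTop_of_tendsto_one_sub_stdNormalCDF
    (h : Tendsto (fun n => 1 - stdNormalCDF (u n)) l (𝓝 0)) : Tendsto u l atTop := by
  refine tendsto_atTop.2 fun M => ?_
  have hM : 0 < max M 1 := lt_max_of_lt_right one_pos
  have h_pos : 0 < 1 - stdNormalCDF (max M 1) :=
    (mul_pos (by positivity) (stdNormalPDF_pos _)).trans_le (le_one_sub_stdNormalCDF hM)
  filter_upwards [h.eventually (gt_mem_nhds h_pos)] with n hn
  by_contra! hlt
  linarith [stdNormalCDF_mono (hlt.le.trans (le_max_left M 1))]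

lemma tendsto_mul_one_sub_stdNormalCDF_iff {a : ℝ} (hu : Tendsto u l atTop) :
    Tendsto (fun n => c n * (1 - stdNormalCDF (u n))) l (𝓝 a) ↔
      Tendsto (fun n => c n * stdNormalPDF (u n) / u n) l (𝓝 a) := by
  set mills := fun n => u n * (1 - stdNormalCDF (u n)) / stdNormalPDF (u n)
  have hmills : Tendsto mills l (𝓝 1) :=
    tendsto_mul_one_sub_stdNormalCDF_div_stdNormalPDF.comp hu
  have h_eq : ∀ᶠ n in l,
      c n * (1 - stdNormalCDF (u n)) = c n * stdNormalPDF (u n) / u n * mills n := by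
    filter_upwards [hu.eventually_gt_atTop 0] with n hn
    simp only [mills]
    field_simp [(stdNormalPDF_pos (u n)).ne']
  constructor
  · intro h
    have h_div := h.div hmills one_ne_zero
    rw [div_one] at h_div
    refine h_div.congr' ?_
    filter_upwards [h_eq, hmills.eventually_ne one_ne_zero] with n hn hn_ne
    rw [Pi.div_apply, hn, mul_div_cancel_right₀ _ hn_ne]
  · intro h
    have h_mul := h.mul hmills
    rw [mul_one] at h_mul
    exact h_mul.congr' (h_eq.mono fun n hn => hn.symm)

lemma tendsto_log_div_sq (hu : Tendsto u l atTop) :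
    Tendsto (fun n => log (u n) / u n ^ 2) l (𝓝 0) := by
  have h := isLittleO_log_id_atTop.tendsto_div_nhds_zero.mul tendsto_inv_atTop_zero
  rw [mul_zero] at h
  refine (h.comp hu).congr fun n => ?_
  simp only [Function.comp, id, div_eq_mul_inv, mul_assoc, ← mul_inv, sq]

lemma tendsto_div_sqrt_two_log {x : ι → ℝ} {b : ℝ} (hb : 0 < b) (hu : Tendsto u l atTop)
    (hx : Tendsto x l atTop) (h : Tendsto (fun n => x n * exp (-u n ^ 2 / 2) / u n) l (𝓝 b)) :
    Tendsto (fun n => u n / √(2 * log (x n))) l (𝓝 1) := by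
  have hlog : Tendsto (fun n => 2 * log (x n)) l atTop :=
    (tendsto_log_atTop.comp hx).const_mul_atTop two_pos
  have h_gap : Tendsto (fun n => u n ^ 2 + 2 * log (u n) - 2 * log (x n)) l (𝓝 (-2 * log b)) := by
    refine (((continuousAt_log hb.ne').tendsto.comp h).const_mul (-2)).congr' ?_
    filter_upwards [hu.eventually_gt_atTop 0, hx.eventually_gt_atTop 0] with n hun hxn
    simp only [Function.comp]
    rw [log_div (by positivity) hun.ne', log_mul hxn.ne' (exp_pos _).ne', log_exp]
    ring
  have h_num : Tendsto (fun n => (u n ^ 2 + 2 * log (u n)) / (2 * log (x n))) l (𝓝 1) := by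
    have h_add := (h_gap.div_atTop hlog).const_add 1
    rw [add_zero] at h_add
    refine h_add.congr' ?_
    filter_upwards [hlog.eventually_gt_atTop 0] with n hn
    rw [one_add_div hn.ne']
    ring
  have h_den : Tendsto (fun n => (u n ^ 2 + 2 * log (u n)) / u n ^ 2) l (𝓝 1) := by
    have h_add := ((tendsto_log_div_sq hu).const_mul 2).const_add 1
    rw [mul_zero, add_zero] at h_add
    refine h_add.congr' ?_
    filter_upwards [hu.eventually_gt_atTop 0] with n hn
    field_simp
  have h_sq := h_num.div h_den one_ne_zero
  rw [div_one] at h_sq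
  have h_sqrt := (continuous_sqrt.tendsto 1).comp h_sq
  rw [sqrt_one] at h_sqrt
  refine h_sqrt.congr' ?_
  filter_upwards [hu.eventually_gt_atTop 1, hlog.eventually_gt_atTop 0] with n hun hn
  have h_pos : 0 < u n ^ 2 + 2 * log (u n) := by
    have := log_pos hun
    positivity
  simp only [Function.comp, Pi.div_apply]
  rw [div_div_div_cancel_left' _ _ h_pos.ne', sqrt_div' _ hn.le, sqrt_sq (by linarith)]


lemma tendsto_sqrt_one_add_sq_div (hτ : Tendsto τ l atTop) :
    Tendsto (fun n => √(1 + τ n ^ 2) / τ n) l (𝓝 1) := by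
  have h := (((tendsto_inv_atTop_zero.comp hτ).pow 2).const_add 1).sqrt
  rw [zero_pow two_ne_zero, add_zero, sqrt_one] at h
  refine h.congr' ?_
  filter_upwards [hτ.eventually_gt_atTop 0] with n hn
  calc √(1 + (τ n)⁻¹ ^ 2) = √((1 + τ n ^ 2) / τ n ^ 2) := by
        congr 1
        field_simp
        ring
    _ = √(1 + τ n ^ 2) / τ n := by rw [sqrt_div' _ (sq_nonneg _), sqrt_sq hn.le]

lemma tendsto_shift_div (hτ : Tendsto τ l atTop) (hu : Tendsto (fun n => u n / τ n) l (𝓝 1))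
    (hv : ∀ n, v n = (e + u n * √(1 + τ n ^ 2)) / τ n) :
    Tendsto (fun n => v n / τ n) l (𝓝 1) := by
  have h := (((tendsto_inv_atTop_zero.comp hτ).pow 2).const_mul e).add
    (hu.mul (tendsto_sqrt_one_add_sq_div hτ))
  rw [zero_pow two_ne_zero, mul_zero, zero_add, mul_one] at h
  refine h.congr' ?_
  filter_upwards [hτ.eventually_gt_atTop 0] with n hn
  simp only [Function.comp, hv]
  field_simp

lemma tendsto_shift_atTop (hτ : Tendsto τ l atTop) (hu : Tendsto (fun n => u n / τ n) l (𝓝 1))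
    (hv : ∀ n, v n = (e + u n * √(1 + τ n ^ 2)) / τ n) : Tendsto v l atTop := by
  refine (hτ.atTop_mul_pos one_pos (tendsto_shift_div hτ hu hv)).congr' ?_
  filter_upwards [hτ.eventually_gt_atTop 0] with n hn
  field_simp

lemma tendsto_div_shift (hτ : Tendsto τ l atTop) (hu : Tendsto (fun n => u n / τ n) l (𝓝 1))
    (hv : ∀ n, v n = (e + u n * √(1 + τ n ^ 2)) / τ n) :
    Tendsto (fun n => u n / v n) l (𝓝 1) := by
  have h := hu.div (tendsto_shift_div hτ hu hv) one_ne_zero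
  rw [div_one] at h
  refine h.congr' ?_
  filter_upwards [hτ.eventually_gt_atTop 0] with n hn
  simp only [Pi.div_apply]
  rw [div_div_div_cancel_right₀ hn.ne']

lemma tendsto_shift_sq_sub_sq (hτ : Tendsto τ l atTop)
    (hu : Tendsto (fun n => u n / τ n) l (𝓝 1))
    (hv : ∀ n, v n = (e + u n * √(1 + τ n ^ 2)) / τ n) :
    Tendsto (fun n => v n ^ 2 - u n ^ 2) l (𝓝 (1 + 2 * e)) := by
  have h := ((((tendsto_inv_atTop_zero.comp hτ).pow 2).const_mul (e ^ 2)).add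
    ((hu.mul (tendsto_sqrt_one_add_sq_div hτ)).const_mul (2 * e))).add (hu.pow 2)
  rw [zero_pow two_ne_zero, mul_zero, zero_add, mul_one, mul_one, one_pow, add_comm] at h
  refine h.congr' ?_
  filter_upwards [hτ.eventually_gt_atTop 0] with n hn
  have h_sq : √(1 + τ n ^ 2) ^ 2 = 1 + τ n ^ 2 := sq_sqrt (by positivity)
  simp only [Function.comp, hv]
  field_simp
  linear_combination (-u n ^ 2) * h_sq

lemma tendsto_mul_stdNormalPDF_div_of_sq_sub_sq {a d : ℝ} (hu : Tendsto u l atTop)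
    (hA : Tendsto (fun n => c n * stdNormalPDF (u n) / u n) l (𝓝 a))
    (huv : Tendsto (fun n => u n / v n) l (𝓝 1))
    (hsq : Tendsto (fun n => v n ^ 2 - u n ^ 2) l (𝓝 d)) :
    Tendsto (fun n => c n * stdNormalPDF (v n) / v n) l (𝓝 (a * exp (-d / 2))) := by
  have h := (hA.mul huv).mul (((continuous_exp.tendsto _).comp (hsq.neg.div_const 2)))
  rw [mul_one] at h
  refine h.congr' ?_
  filter_upwards [hu.eventually_gt_atTop 0] with n hn
  simp only [Function.comp, stdNormalPDF_eq_mul_exp (u n) (v n)]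
  field_simp

end Asymptotics

theorem mvpIBP_common_features_general (α : ℝ) (hα : 0 < α) (μ : ℕ → ℝ)
    (hμ : ∀ p : ℕ, 2 ≤ p →
      stdNormalCDF (μ p / Real.sqrt (1 + tauP p ^ 2)) = α / (α + p))
    (εstar : ℝ) :
    Filter.Tendsto
      (fun p : ℕ => (p : ℝ) * (1 - stdNormalCDF ((εstar - μ p) / tauP p)))
      Filter.atTop (nhds (α * Real.exp (-εstar - 1 / 2))) := by
  set u : ℕ → ℝ := fun p => -(μ p / √(1 + tauP p ^ 2))
  have hτ : Tendsto tauP atTop atTop := tendsto_sqrt_atTop.comp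
    ((tendsto_log_atTop.comp tendsto_natCast_atTop_atTop).const_mul_atTop two_pos)
  have htail : ∀ᶠ p : ℕ in atTop, α / (α + p) = 1 - stdNormalCDF (u p) := by
    filter_upwards [eventually_ge_atTop 2] with p hp
    rw [← stdNormalCDF_neg, neg_neg, hμ p hp]
  have hu : Tendsto u atTop atTop := by
    refine tendsto_atTop_of_tendsto_one_sub_stdNormalCDF (Tendsto.congr' htail ?_)
    exact tendsto_const_nhds.div_atTop
      (tendsto_atTop_add_const_left _ α tendsto_natCast_atTop_atTop)
  have hA : Tendsto (fun p : ℕ => (p : ℝ) * stdNormalPDF (u p) / u p) atTop (𝓝 α) := by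
    refine (tendsto_mul_one_sub_stdNormalCDF_iff hu).1 ?_
    have h := (tendsto_natCast_div_add_atTop α).const_mul α
    rw [mul_one] at h
    refine h.congr' (htail.mono fun p hp => ?_)
    dsimp only
    rw [← hp]
    ring
  have huτ : Tendsto (fun p => u p / tauP p) atTop (𝓝 1) := by
    refine tendsto_div_sqrt_two_log (b := √(2 * π) * α) (by positivity) hu
      tendsto_natCast_atTop_atTop ?_
    refine (hA.const_mul √(2 * π)).congr fun p => ?_
    rw [stdNormalPDF]
    field_simp
  have hv : ∀ p, (εstar - μ p) / tauP p = (εstar + u p * √(1 + tauP p ^ 2)) / tauP p := by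
    intro p
    rw [neg_mul, div_mul_cancel₀ _ (sqrt_pos.2 (by positivity)).ne', sub_eq_add_neg]
  refine (tendsto_mul_one_sub_stdNormalCDF_iff (tendsto_shift_atTop hτ huτ hv)).2 ?_
  convert tendsto_mul_stdNormalPDF_div_of_sq_sub_sq hu hA (tendsto_div_shift hτ huτ hv)
    (tendsto_shift_sq_sub_sq hτ huτ hv) using 4
  ring

/-- Proposition 4: with `Φ(ε*) = ε ∈ (0,1)`, the expected number of common features
`E(c^{(ε)}) = p(1 - Φ((ε* - μ_p)/τ_p))` converges to `α exp(-ε* - 1/2)` as `p → ∞`. -/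
theorem mvpIBP_common_features (α : ℝ) (hα : 0 < α) (μ : ℕ → ℝ)
    (hμ : ∀ p : ℕ, 2 ≤ p →
      stdNormalCDF (μ p / Real.sqrt (1 + tauP p ^ 2)) = α / (α + p))
    (ε εstar : ℝ) (hε : ε ∈ Set.Ioo (0 : ℝ) 1) (hεstar : stdNormalCDF εstar = ε) :
    Filter.Tendsto
      (fun p : ℕ => (p : ℝ) * (1 - stdNormalCDF ((εstar - μ p) / tauP p)))
      Filter.atTop (nhds (α * Real.exp (-εstar - 1 / 2))) :=
  mvpIBP_common_features_general α hα μ hμ εstar
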